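/- For every integer n ≥ 2 there is a short exact sequence of D-D-bimodules 0 → B_1(1) → B_n(1) → B_{n−1}(1) → 0. -/

import Mathlib

open DualNumber TrivSqZeroExt

/-- Multiplication by `ε` on the dual numbers `D = F[x]/(x²)`, as an `F`-linear map.
Since `D` is commutative this is both the left and the right action of `x` on the
regular bimodule. -/
noncomputable def xD (F : Type) [Field F] : DualNumber F →ₗ[F] DualNumber F :=
  LinearMap.mulLeft F (eps : DualNumber F)

/-- The underlying `F`-vector space of the string bimodule `M_k`:
coordinates indexed by `Fin (2*k+3)`, where the Lean index `j` corresponds to the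
basis vector `m_{j+1}` of the paper. -/
abbrev Mcar (F : Type) [Field F] (k : ℕ) := Fin (2 * k + 3) → F

/-- The left action of `x` on `M_k`:  `x·m_{2j} = m_{2j+1}`, `x·m_odd = 0`. -/
def lM (F : Type) [Field F] (k : ℕ) : Mcar F k →ₗ[F] Mcar F k where
  toFun v := fun j =>
    if ((j : ℕ) % 2 = 0 ∧ (j : ℕ) ≠ 0) then
      v ⟨(j : ℕ) - 1, lt_of_le_of_lt (Nat.sub_le _ _) j.isLt⟩ else 0
  map_add' u v := by
    funext j; simp only [Pi.add_apply]; split_ifs <;> simp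
  map_smul' c v := by
    funext j; simp only [Pi.smul_apply]; split_ifs <;> simp

/-- The right action of `x` on `M_k`:  `m_{2j}·x = m_{2j-1}`, `m_odd·x = 0`. -/
def rM (F : Type) [Field F] (k : ℕ) : Mcar F k →ₗ[F] Mcar F k where
  toFun v := fun j =>
    if h : ((j : ℕ) % 2 = 0 ∧ (j : ℕ) < 2 * k + 2) then
      v ⟨(j : ℕ) + 1, Nat.succ_lt_succ h.2⟩ else 0
  map_add' u v := by
    funext j
    by_cases h : ((j : ℕ) % 2 = 0 ∧ (j : ℕ) < 2 * k + 2) <;> simp [h]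
  map_smul' c v := by
    funext j
    by_cases h : ((j : ℕ) % 2 = 0 ∧ (j : ℕ) < 2 * k + 2) <;> simp [h]

/-- The basis vector `m_{j+1}` of `M_k`. -/
def eM (F : Type) [Field F] (k : ℕ) (j : Fin (2 * k + 3)) : Mcar F k := Pi.single j 1

/-- A morphism of `D`-`D`-bimodules, where a bimodule is encoded as an `F`-vector
space together with the two (commuting, square-zero) operators giving the left and
right actions of `x`. -/
def IsBimodHom (F : Type) [Field F] {V W : Type} [AddCommGroup V] [Module F V]
    [AddCommGroup W] [Module F W] (lV rV : V →ₗ[F] V) (lW rW : W →ₗ[F] W)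
    (f : V →ₗ[F] W) : Prop :=
  f ∘ₗ lV = lW ∘ₗ f ∧ f ∘ₗ rV = rW ∘ₗ f

/-- `f` factors through the simple `D`-`D`-bimodule, i.e. the one-dimensional
bimodule `F` on which `x` acts as zero on both sides. -/
def FactorsThroughSimple (F : Type) [Field F] {V W : Type} [AddCommGroup V] [Module F V]
    [AddCommGroup W] [Module F W] (lV rV : V →ₗ[F] V) (lW rW : W →ₗ[F] W)
    (f : V →ₗ[F] W) : Prop :=
  ∃ (h : V →ₗ[F] F) (g : F →ₗ[F] W),
    IsBimodHom F lV rV 0 0 h ∧ IsBimodHom F 0 0 lW rW g ∧ f = g ∘ₗ h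

/-- The bimodule homomorphism `φ_k : M_k → D`, sending `m_j` to `1` for `j` even and
to `x` for `j` odd (paper numbering). -/
noncomputable def phi (F : Type) [Field F] (k : ℕ) : Mcar F k →ₗ[F] DualNumber F :=
  (Algebra.linearMap F (DualNumber F)) ∘ₗ
      (∑ j ∈ Finset.univ.filter (fun j : Fin (2 * k + 3) => (j : ℕ) % 2 = 1),
        LinearMap.proj j) +
    (TrivSqZeroExt.inrHom F F) ∘ₗ
      (∑ j ∈ Finset.univ.filter (fun j : Fin (2 * k + 3) => (j : ℕ) % 2 = 0),
        LinearMap.proj j)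

/-- The underlying space `F^n ⊕ F^n` of the band bimodule `B_n(1)`. -/
abbrev Bcar (F : Type) [Field F] (n : ℕ) := (Fin n → F) × (Fin n → F)

/-- The left action of `x` on the band bimodule `B_n(1)`: `x·(u,v) = (0,u)`. -/
def lB (F : Type) [Field F] (n : ℕ) : Bcar F n →ₗ[F] Bcar F n where
  toFun p := (0, p.1)
  map_add' u v := by simp
  map_smul' c v := by simp

/-- The `n×n` Jordan block with eigenvalue `1`, acting on `F^n`. -/
def jordan (F : Type) [Field F] (n : ℕ) : (Fin n → F) →ₗ[F] (Fin n → F) where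
  toFun u := fun i => u i + if h : 1 ≤ (i : ℕ) then u ⟨(i : ℕ) - 1, lt_of_le_of_lt (Nat.sub_le _ _) i.isLt⟩ else 0
  map_add' u v := by funext i; by_cases h : 1 ≤ (i : ℕ) <;> simp [h] <;> ring
  map_smul' c v := by funext i; by_cases h : 1 ≤ (i : ℕ) <;> simp [h] <;> ring

/-- The right action of `x` on the band bimodule `B_n(1)`: `(u,v)·x = (0, J_n u)`. -/
def rB (F : Type) [Field F] (n : ℕ) : Bcar F n →ₗ[F] Bcar F n where
  toFun p := (0, jordan F n p.1)
  map_add' u v := by simp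
  map_smul' c v := by simp

/-! The last standard basis vector of `F^n` spans a line on which the lower-triangular
`J_n` acts as the identity, and deleting the last coordinate intertwines `J_n` with
`J_{n-1}`. Applying these maps to both components `(u, v)` gives bimodule maps
`B_1(1) → B_n(1) → B_{n-1}(1)`, exact because `0 → F → F^n → F^{n-1} → 0` is. -/

section

variable (F : Type) [Field F]

theorem isBimodHom_prodMap {m n : ℕ} (φ : (Fin m → F) →ₗ[F] (Fin n → F))
    (hφ : φ ∘ₗ jordan F m = jordan F n ∘ₗ φ) :
    IsBimodHom F (lB F m) (rB F m) (lB F n) (rB F n) (φ.prodMap φ) := by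
  refine ⟨LinearMap.ext fun p => ?_, LinearMap.ext fun p => ?_⟩
  · simp [lB]
  · simpa [rB] using LinearMap.congr_fun hφ p.1

theorem jordan_one : jordan F 1 = LinearMap.id := by
  ext u i
  simp [jordan]

noncomputable def lastIncl (m : ℕ) : (Fin 1 → F) →ₗ[F] (Fin (m + 1) → F) :=
  LinearMap.single F (fun _ => F) (Fin.last m) ∘ₗ LinearMap.proj 0

def truncate (m : ℕ) : (Fin (m + 1) → F) →ₗ[F] (Fin m → F) :=
  LinearMap.funLeft F F Fin.castSucc

theorem lastIncl_comp_jordan (m : ℕ) :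
    lastIncl F m ∘ₗ jordan F 1 = jordan F (m + 1) ∘ₗ lastIncl F m := by
  rw [jordan_one, LinearMap.comp_id]
  refine (LinearMap.ext fun u => funext fun i => ?_).symm
  simp only [jordan, lastIncl, LinearMap.coe_mk, AddHom.coe_mk, LinearMap.coe_comp,
    Function.comp_apply, LinearMap.coe_single, LinearMap.coe_proj, Function.eval]
  by_cases h : 1 ≤ (i : ℕ)
  · rw [dif_pos h, add_eq_left]
    exact Pi.single_eq_of_ne (Fin.ne_of_lt (by simp only [Fin.lt_def, Fin.val_last]; omega)) _
  · rw [dif_neg h, add_zero]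

theorem truncate_comp_jordan (m : ℕ) :
    truncate F m ∘ₗ jordan F (m + 1) = jordan F m ∘ₗ truncate F m := by
  ext u i
  simp [truncate, jordan]

theorem lastIncl_injective (m : ℕ) : Function.Injective (lastIncl F m) := by
  intro u v h
  funext i
  simpa [lastIncl, Subsingleton.elim i 0] using congr_fun h (Fin.last m)

theorem truncate_surjective (m : ℕ) : Function.Surjective (truncate F m) :=
  LinearMap.funLeft_surjective_of_injective F F _ (Fin.castSucc_injective m)

theorem range_lastIncl (m : ℕ) :
    LinearMap.range (lastIncl F m) = LinearMap.ker (truncate F m) := by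
  ext v
  constructor
  · rintro ⟨u, rfl⟩
    funext i
    exact Pi.single_eq_of_ne (Fin.castSucc_lt_last i).ne _
  · intro hv
    refine ⟨fun _ => v (Fin.last m), funext fun i => ?_⟩
    induction i using Fin.lastCases with
    | last => simp [lastIncl]
    | cast j =>
      rw [LinearMap.mem_ker] at hv
      simpa [lastIncl, truncate, (Fin.castSucc_lt_last j).ne] using (congr_fun hv j).symm

end

theorem stmt_11 (F : Type) [Field F] (n : ℕ) (hn : 2 ≤ n) :
    ∃ (f : Bcar F 1 →ₗ[F] Bcar F n) (g : Bcar F n →ₗ[F] Bcar F (n - 1)),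
      IsBimodHom F (lB F 1) (rB F 1) (lB F n) (rB F n) f ∧
        IsBimodHom F (lB F n) (rB F n) (lB F (n - 1)) (rB F (n - 1)) g ∧
        Function.Injective f ∧ Function.Surjective g ∧
        LinearMap.range f = LinearMap.ker g := by
  obtain ⟨m, rfl⟩ : ∃ m, n = m + 1 := ⟨n - 1, by omega⟩
  refine ⟨(lastIncl F m).prodMap (lastIncl F m), (truncate F m).prodMap (truncate F m),
    isBimodHom_prodMap F _ (lastIncl_comp_jordan F m),
    isBimodHom_prodMap F _ (truncate_comp_jordan F m),
    (lastIncl_injective F m).prodMap (lastIncl_injective F m),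
    (truncate_surjective F m).prodMap (truncate_surjective F m), ?_⟩
  rw [LinearMap.range_prodMap, LinearMap.ker_prodMap, range_lastIncl]
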